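/- arXiv:1905.06919 — 3 statements merged into one kernel-verified Lean document; each statement's English description precedes it below -/
import Mathlib

section
/- Define p̃(ρ,S) := p(ρ, ρ^{γ−1} exp((γ−1) S/(c_V ρ))) = ρ^γ exp((γ−1)S/(c_V ρ)) for ρ>0, S∈ℝ, where p(ρ,θ)=ρθ, γ>1 and c_V(γ−1)=1. Then p̃ is a convex function of (ρ,S) on (0,∞)×ℝ. -/
/-!
With `c = (γ - 1) / (cV γ)` one has `p̃(ρ, S) = h(ρ, S) ^ γ` for `h(ρ, S) = ρ exp(c S / ρ)`.
The function `h` is the perspective of the convex function `s ↦ exp(c s)`, hence convex, and it is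
positive; since `t ↦ t ^ γ` is convex and nondecreasing on `[0, ∞)` for `γ ≥ 1`, `p̃` is convex.
-/

open Set Real

section Perspective

variable {E : Type*} [AddCommGroup E] [Module ℝ E]

/-- The weights are `μ = a t₁ / t` and `ν = b t₂ / t` with `t = a t₁ + b t₂`. -/
theorem exists_perspective_weights {t₁ t₂ a b : ℝ} (x₁ x₂ : E) (ht₁ : 0 < t₁) (ht₂ : 0 < t₂)
    (ha : 0 ≤ a) (hb : 0 ≤ b) (hab : a + b = 1) :
    0 < a * t₁ + b * t₂ ∧ ∃ μ ν : ℝ, 0 ≤ μ ∧ 0 ≤ ν ∧ μ + ν = 1 ∧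
      a * t₁ = (a * t₁ + b * t₂) * μ ∧ b * t₂ = (a * t₁ + b * t₂) * ν ∧
      (a * t₁ + b * t₂)⁻¹ • (a • x₁ + b • x₂) = μ • (t₁⁻¹ • x₁) + ν • (t₂⁻¹ • x₂) := by
  have ht : 0 < a * t₁ + b * t₂ := by simpa using convex_Ioi (0 : ℝ) ht₁ ht₂ ha hb hab
  refine ⟨ht, a * t₁ / (a * t₁ + b * t₂), b * t₂ / (a * t₁ + b * t₂), by positivity,
    by positivity, by field_simp, by field_simp, by field_simp, ?_⟩
  simp only [smul_add, smul_smul]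
  congr 2 <;> field_simp

theorem ConvexOn.perspective {s : Set E} {f : E → ℝ} (hf : ConvexOn ℝ s f) :
    ConvexOn ℝ {p : ℝ × E | 0 < p.1 ∧ p.1⁻¹ • p.2 ∈ s} (fun p => p.1 * f (p.1⁻¹ • p.2)) := by
  refine ⟨?_, ?_⟩
  · rintro ⟨t₁, x₁⟩ ⟨ht₁ : 0 < t₁, hx₁⟩ ⟨t₂, x₂⟩ ⟨ht₂ : 0 < t₂, hx₂⟩ a b ha hb hab
    obtain ⟨ht, μ, ν, hμ, hν, hμν, -, -, hcomb⟩ :=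
      exists_perspective_weights x₁ x₂ ht₁ ht₂ ha hb hab
    refine ⟨ht, ?_⟩
    simp only [Prod.smul_mk, Prod.mk_add_mk, smul_eq_mul, hcomb]
    exact hf.1 hx₁ hx₂ hμ hν hμν
  · rintro ⟨t₁, x₁⟩ ⟨ht₁ : 0 < t₁, hx₁⟩ ⟨t₂, x₂⟩ ⟨ht₂ : 0 < t₂, hx₂⟩ a b ha hb hab
    obtain ⟨ht, μ, ν, hμ, hν, hμν, haμ, hbν, hcomb⟩ :=
      exists_perspective_weights x₁ x₂ ht₁ ht₂ ha hb hab
    simp only [Prod.smul_mk, Prod.mk_add_mk, smul_eq_mul, hcomb]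
    calc (a * t₁ + b * t₂) * f (μ • t₁⁻¹ • x₁ + ν • t₂⁻¹ • x₂)
        ≤ (a * t₁ + b * t₂) * (μ * f (t₁⁻¹ • x₁) + ν * f (t₂⁻¹ • x₂)) :=
          mul_le_mul_of_nonneg_left (hf.2 hx₁ hx₂ hμ hν hμν) ht.le
      _ = a * (t₁ * f (t₁⁻¹ • x₁)) + b * (t₂ * f (t₂⁻¹ • x₂)) := by
          rw [mul_add, ← mul_assoc, ← mul_assoc, ← haμ, ← hbν]; ring

end Perspective

theorem ConvexOn.comp_of_mapsTo {𝕜 E β : Type*} [Semiring 𝕜] [PartialOrder 𝕜]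
    [AddCommMonoid E] [AddCommMonoid β] [PartialOrder β] [Module 𝕜 E] [Module 𝕜 β]
    [IsOrderedAddMonoid β] {s : Set E} {t : Set β} {f : E → β} {g : β → β}
    (hg : ConvexOn 𝕜 t g) (hf : ConvexOn 𝕜 s f) (hg' : MonotoneOn g t) (hst : MapsTo f s t) :
    ConvexOn 𝕜 s (g ∘ f) :=
  ⟨hf.1, fun _ hx _ hy _ _ ha hb hab =>
    (hg' (hst (hf.1 hx hy ha hb hab)) (hg.1 (hst hx) (hst hy) ha hb hab)
      (hf.2 hx hy ha hb hab)).trans (hg.2 (hst hx) (hst hy) ha hb hab)⟩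

theorem pressure_convex_in_conservative_variables_general (γ cV : ℝ) (hγ : 1 < γ) :
    ConvexOn ℝ (Set.Ioi (0 : ℝ) ×ˢ (Set.univ : Set ℝ))
      (fun q : ℝ × ℝ => q.1 ^ γ * Real.exp ((γ - 1) * q.2 / (cV * q.1))) := by
  set c := (γ - 1) / cV / γ
  have hexp : ConvexOn ℝ univ fun s : ℝ => exp (c * s) :=
    convexOn_exp.comp_linearMap (LinearMap.mulLeft ℝ c)
  have hdom : {p : ℝ × ℝ | 0 < p.1 ∧ p.1⁻¹ • p.2 ∈ univ} = Ioi 0 ×ˢ univ := by ext; simp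
  have hpersp := hdom ▸ hexp.perspective
  have hnonneg :
      MapsTo (fun p : ℝ × ℝ => p.1 * exp (c * (p.1⁻¹ • p.2))) (Ioi 0 ×ˢ univ) (Ici 0) :=
    fun p ⟨(hp : 0 < p.1), _⟩ => mem_Ici.2 (by positivity)
  refine ((convexOn_rpow hγ.le).comp_of_mapsTo hpersp
    (monotoneOn_rpow_Ici_of_exponent_nonneg (by linarith)) hnonneg).congr ?_
  rintro ⟨ρ, S⟩ ⟨hρ : 0 < ρ, -⟩
  simp only [Function.comp, smul_eq_mul]
  rw [mul_rpow hρ.le (exp_pos _).le, ← exp_mul, mul_right_comm, div_mul_cancel₀ _ (by linarith)]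
  congr 2
  ring

/-- The pressure in conservative variables, `p̃(ρ,S) = ρ^γ exp((γ-1) S/(cV ρ))`,
is a convex function of `(ρ,S)` on `(0,∞) × ℝ`. -/
theorem pressure_convex_in_conservative_variables (γ cV : ℝ) (hγ : 1 < γ) (hcV : 0 < cV)
    (hrel : cV * (γ - 1) = 1) :
    ConvexOn ℝ (Set.Ioi (0 : ℝ) ×ˢ (Set.univ : Set ℝ))
      (fun q : ℝ × ℝ => q.1 ^ γ * Real.exp ((γ - 1) * q.2 / (cV * q.1))) :=
  pressure_convex_in_conservative_variables_general γ cV hγ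
end

section
/- Coercivity of the relative entropy on compacts: fix 0 < r < R, 0 < θ̲ < θ̄ and define for ρ,Θ,𝔯,𝔗 > 0, m,𝔲 ∈ ℝ^N the relative entropy 𝔈(ρ,m,Θ | 𝔯,𝔲,𝔗) = (1/2)ρ|m/ρ − 𝔲|² + ρe(ρ,Θ) − 𝔗 ρ s(ρ,Θ) − ∂_𝔯 H_𝔗(𝔯,𝔗)(ρ−𝔯) − H_𝔗(𝔯,𝔗), with e(ρ,Θ)=c_V Θ, s(ρ,Θ)=log(Θ^{c_V}/ρ), H_𝔗(𝔯,θ)=𝔯e(𝔯,θ)−𝔗𝔯s(𝔯,θ), c_V(γ−1)=1, γ>1. Then there exists C>0 depending on r,R,θ̲,θ̄ such that whenever ρ,𝔯 ∈ [r,R] and Θ,𝔗 ∈ [θ̲,θ̄]: 𝔈(ρ,m,Θ | 𝔯,𝔲,𝔗) ≥ C( (1/2)ρ|m/ρ−𝔲|² + |ρ−𝔯|² + |Θ−𝔗|² ). -/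
/-!
Up to the kinetic term, the relative entropy is a sum of two Bregman divergences:
`𝔗` times that of `x ↦ x log x` between `𝔯` and `ρ`, and `cV ρ 𝔗` times that of `-log` between
`𝔗` and `Θ`. On `(0, R]` the function `x log x` is `R⁻¹`-strongly convex and `-log` is
`b⁻²`-strongly convex on `(0, b]`, so each divergence dominates a multiple of the squared
distance, and the prefactors `𝔗`, `ρ` are bounded below on the compact set.
-/

open Set Real

lemma ConvexOn.add_mul_sub_le_of_hasDerivAt {S : Set ℝ} {f : ℝ → ℝ} {f' x y : ℝ}
    (hfc : ConvexOn ℝ S f) (hx : x ∈ S) (hy : y ∈ S) (hf : HasDerivAt f f' x) :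
    f x + f' * (y - x) ≤ f y := by
  rcases lt_trichotomy x y with hxy | rfl | hyx
  · have := hfc.le_slope_of_hasDerivAt hx hy hxy hf
    rw [slope_def_field, le_div_iff₀ (sub_pos.2 hxy)] at this
    linarith
  · simp
  · have := hfc.slope_le_of_hasDerivAt hy hx hyx hf
    rw [slope_def_field, div_le_iff₀ (sub_pos.2 hyx)] at this
    linarith

lemma StrongConvexOn.add_mul_sub_add_sq_le_of_hasDerivAt {S : Set ℝ} {f : ℝ → ℝ}
    {m f' x y : ℝ} (hfc : StrongConvexOn S m f) (hx : x ∈ S) (hy : y ∈ S)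
    (hf : HasDerivAt f f' x) :
    f x + f' * (y - x) + m / 2 * (y - x) ^ 2 ≤ f y := by
  rw [strongConvexOn_iff_convex] at hfc
  simp only [Real.norm_eq_abs, sq_abs] at hfc
  have := hfc.add_mul_sub_le_of_hasDerivAt hx hy
    (hf.sub ((hasDerivAt_pow 2 x).const_mul (m / 2)))
  linarith

lemma strongConvexOn_of_hasDerivAt2_ge {D : Set ℝ} (hD : Convex ℝ D) {f f' f'' : ℝ → ℝ}
    {m : ℝ} (hf : ∀ t ∈ D, HasDerivAt f (f' t) t) (hf' : ∀ t ∈ D, HasDerivAt f' (f'' t) t)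
    (hm : ∀ t ∈ D, m ≤ f'' t) : StrongConvexOn D m f := by
  rw [strongConvexOn_iff_convex]
  simp only [Real.norm_eq_abs, sq_abs]
  refine convexOn_of_hasDerivWithinAt2_nonneg hD (f' := fun t => f' t - m * t)
    (f'' := fun t => f'' t - m) ?_ (fun t ht => ?_) (fun t ht => ?_)
    (fun t ht => sub_nonneg.2 (hm t (interior_subset ht)))
  · exact fun t ht => ((hf t ht).continuousAt.sub (by fun_prop)).continuousWithinAt
  · have := (hf t (interior_subset ht)).sub ((hasDerivAt_pow 2 t).const_mul (m / 2))
    exact (this.congr_deriv (by ring)).hasDerivWithinAt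
  · have := (hf' t (interior_subset ht)).sub ((hasDerivAt_id t).const_mul m)
    exact (this.congr_deriv (by simp)).hasDerivWithinAt

lemma strongConvexOn_mul_log (R : ℝ) : StrongConvexOn (Ioc 0 R) R⁻¹ (fun x => x * log x) :=
  strongConvexOn_of_hasDerivAt2_ge (convex_Ioc 0 R)
    (fun _ ht => hasDerivAt_mul_log ht.1.ne')
    (fun _ ht => (hasDerivAt_log ht.1.ne').add_const 1)
    (fun _ ht => inv_anti₀ ht.1 ht.2)

lemma strongConvexOn_neg_log (b : ℝ) : StrongConvexOn (Ioc 0 b) (b ^ 2)⁻¹ (fun x => -log x) :=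
  strongConvexOn_of_hasDerivAt2_ge (convex_Ioc 0 b)
    (fun _ ht => (hasDerivAt_log ht.1.ne').neg)
    (fun _ ht => by simpa using (hasDerivAt_inv ht.1.ne').fun_neg)
    (fun _ ht => inv_anti₀ (pow_pos ht.1 2) (pow_le_pow_left₀ ht.1.le ht.2 2))

lemma hasDerivAt_mul_log_div {A x : ℝ} (hA : A ≠ 0) (hx : x ≠ 0) :
    HasDerivAt (fun x => x * log (A / x)) (log (A / x) - 1) x := by
  have hlog := ((hasDerivAt_inv hx).const_mul A).log (mul_ne_zero hA (inv_ne_zero hx))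
  simp only [← div_eq_mul_inv] at hlog
  exact ((hasDerivAt_id' x).mul hlog).congr_deriv (by field_simp; ring)

lemma relative_entropy_eq_bregman {cV ρ 𝔯 Θ 𝔗 : ℝ} (hρ : 0 < ρ) (h𝔯 : 0 < 𝔯) (hΘ : 0 < Θ)
    (h𝔗 : 0 < 𝔗) :
    ρ * (cV * Θ) - 𝔗 * (ρ * log (Θ ^ cV / ρ))
        - deriv (fun x : ℝ => x * (cV * 𝔗) - 𝔗 * (x * log (𝔗 ^ cV / x))) 𝔯 * (ρ - 𝔯)
        - (𝔯 * (cV * 𝔗) - 𝔗 * (𝔯 * log (𝔗 ^ cV / 𝔯)))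
      = 𝔗 * (ρ * log ρ - (𝔯 * log 𝔯 + (log 𝔯 + 1) * (ρ - 𝔯)))
        + cV * ρ * (𝔗 * (-log Θ - (-log 𝔗 + -𝔗⁻¹ * (Θ - 𝔗)))) := by
  have hderiv : deriv (fun x : ℝ => x * (cV * 𝔗) - 𝔗 * (x * log (𝔗 ^ cV / x))) 𝔯
      = cV * 𝔗 - 𝔗 * (log (𝔗 ^ cV / 𝔯) - 1) := by
    have hA : 𝔗 ^ cV ≠ 0 := by positivity
    simpa using (((hasDerivAt_id' 𝔯).mul_const (cV * 𝔗)).fun_sub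
      ((hasDerivAt_mul_log_div hA h𝔯.ne').const_mul 𝔗)).deriv
  rw [hderiv, log_div (by positivity) hρ.ne', log_rpow hΘ, log_div (by positivity) h𝔯.ne',
    log_rpow h𝔗]
  field_simp
  ring

theorem relative_entropy_coercivity_general (N : ℕ) (cV r R θl θu : ℝ)
    (hcV : 0 < cV)
    (hr : 0 < r) (hrR : r < R) (hθl : 0 < θl) (hθ : θl < θu) :
    ∃ C > 0, ∀ ρ 𝔯 Θ 𝔗 : ℝ,
      ρ ∈ Set.Icc r R → 𝔯 ∈ Set.Icc r R → Θ ∈ Set.Icc θl θu → 𝔗 ∈ Set.Icc θl θu →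
      ∀ m 𝔲 : EuclideanSpace ℝ (Fin N),
      C * ((1 / 2) * ρ * ‖ρ⁻¹ • m - 𝔲‖ ^ 2 + |ρ - 𝔯| ^ 2 + |Θ - 𝔗| ^ 2)
        ≤ (1 / 2) * ρ * ‖ρ⁻¹ • m - 𝔲‖ ^ 2
          + ρ * (cV * Θ) - 𝔗 * (ρ * Real.log (Θ ^ cV / ρ))
          - deriv (fun x : ℝ => x * (cV * 𝔗) - 𝔗 * (x * Real.log (𝔗 ^ cV / x))) 𝔯
              * (ρ - 𝔯)
          - (𝔯 * (cV * 𝔗) - 𝔗 * (𝔯 * Real.log (𝔗 ^ cV / 𝔯))) := by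
  have hR : 0 < R := hr.trans hrR
  have hθu : 0 < θu := hθl.trans hθ
  set c₁ := θl * R⁻¹ / 2
  set c₂ := cV * r * θl * (θu ^ 2)⁻¹ / 2
  refine ⟨min 1 (min c₁ c₂), by positivity, fun ρ 𝔯 Θ 𝔗 hρ h𝔯 hΘ h𝔗 m 𝔲 => ?_⟩
  have hρ0 : 0 < ρ := hr.trans_le hρ.1
  have h𝔯0 : 0 < 𝔯 := hr.trans_le h𝔯.1
  have hΘ0 : 0 < Θ := hθl.trans_le hΘ.1
  have h𝔗0 : 0 < 𝔗 := hθl.trans_le h𝔗.1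
  have hdens := (strongConvexOn_mul_log R).add_mul_sub_add_sq_le_of_hasDerivAt
    ⟨h𝔯0, h𝔯.2⟩ ⟨hρ0, hρ.2⟩ (hasDerivAt_mul_log h𝔯0.ne')
  have htherm := (strongConvexOn_neg_log θu).add_mul_sub_add_sq_le_of_hasDerivAt
    ⟨h𝔗0, h𝔗.2⟩ ⟨hΘ0, hΘ.2⟩ (hasDerivAt_log h𝔗0.ne').neg
  have hρ𝔯 : c₁ * (ρ - 𝔯) ^ 2 ≤ 𝔗 * (ρ * log ρ - (𝔯 * log 𝔯 + (log 𝔯 + 1) * (ρ - 𝔯))) :=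
    calc c₁ * (ρ - 𝔯) ^ 2 = θl * (R⁻¹ / 2 * (ρ - 𝔯) ^ 2) := by ring
      _ ≤ 𝔗 * (R⁻¹ / 2 * (ρ - 𝔯) ^ 2) := by gcongr; exact h𝔗.1
      _ ≤ _ := by gcongr; linarith
  have hΘ𝔗 : c₂ * (Θ - 𝔗) ^ 2 ≤ cV * ρ * (𝔗 * (-log Θ - (-log 𝔗 + -𝔗⁻¹ * (Θ - 𝔗)))) :=
    calc c₂ * (Θ - 𝔗) ^ 2 = cV * r * (θl * ((θu ^ 2)⁻¹ / 2 * (Θ - 𝔗) ^ 2)) := by ring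
      _ ≤ cV * ρ * (𝔗 * ((θu ^ 2)⁻¹ / 2 * (Θ - 𝔗) ^ 2)) := by gcongr; exacts [hρ.1, h𝔗.1]
      _ ≤ _ := by gcongr; linarith
  have hK : 0 ≤ 1 / 2 * ρ * ‖ρ⁻¹ • m - 𝔲‖ ^ 2 := by positivity
  have hC : min 1 (min c₁ c₂) ≤ 1 ∧ min 1 (min c₁ c₂) ≤ c₁ ∧ min 1 (min c₁ c₂) ≤ c₂ :=
    ⟨min_le_left _ _, (min_le_right _ _).trans (min_le_left _ _),
      (min_le_right _ _).trans (min_le_right _ _)⟩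
  rw [sq_abs, sq_abs]
  linarith [relative_entropy_eq_bregman (cV := cV) hρ0 h𝔯0 hΘ0 h𝔗0,
    mul_le_mul_of_nonneg_right hC.1 hK, mul_le_mul_of_nonneg_right hC.2.1 (sq_nonneg (ρ - 𝔯)),
    mul_le_mul_of_nonneg_right hC.2.2 (sq_nonneg (Θ - 𝔗))]

/-- Coercivity of the relative entropy on compacts: with `e = cV Θ`, `s = log(Θ^cV/ρ)`,
`H_𝔗(𝔯,θ) = 𝔯 e(𝔯,θ) − 𝔗 𝔯 s(𝔯,θ)`, `cV(γ−1) = 1`, there is `C > 0` (depending on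
`r,R,θ̲,θ̄`) such that for `ρ,𝔯 ∈ [r,R]`, `Θ,𝔗 ∈ [θ̲,θ̄]`, and all `m,𝔲 ∈ ℝ^N`,
`𝔈(ρ,m,Θ|𝔯,𝔲,𝔗) ≥ C((1/2)ρ|m/ρ−𝔲|² + |ρ−𝔯|² + |Θ−𝔗|²)`. -/
theorem relative_entropy_coercivity (N : ℕ) (γ cV r R θl θu : ℝ)
    (hγ : 1 < γ) (hcV : 0 < cV) (hrel : cV * (γ - 1) = 1)
    (hr : 0 < r) (hrR : r < R) (hθl : 0 < θl) (hθ : θl < θu) :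
    ∃ C > 0, ∀ ρ 𝔯 Θ 𝔗 : ℝ,
      ρ ∈ Set.Icc r R → 𝔯 ∈ Set.Icc r R → Θ ∈ Set.Icc θl θu → 𝔗 ∈ Set.Icc θl θu →
      ∀ m 𝔲 : EuclideanSpace ℝ (Fin N),
      C * ((1 / 2) * ρ * ‖ρ⁻¹ • m - 𝔲‖ ^ 2 + |ρ - 𝔯| ^ 2 + |Θ - 𝔗| ^ 2)
        ≤ (1 / 2) * ρ * ‖ρ⁻¹ • m - 𝔲‖ ^ 2
          + ρ * (cV * Θ) - 𝔗 * (ρ * Real.log (Θ ^ cV / ρ))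
          - deriv (fun x : ℝ => x * (cV * 𝔗) - 𝔗 * (x * Real.log (𝔗 ^ cV / x))) 𝔯
              * (ρ - 𝔯)
          - (𝔯 * (cV * 𝔗) - 𝔗 * (𝔯 * Real.log (𝔗 ^ cV / 𝔯))) :=
  relative_entropy_coercivity_general N cV r R θl θu hcV hr hrR hθl hθ
end

section
/- Difference-quotient product estimate (Lemma 3.1 of Gwiazda–Michálek–Świerczewska-Gwiazda type, used in the proof of Theorem 1.2): let f,g ∈ L³(𝒰̃) on bounded open 𝒰 ⊂⊂ 𝒰̃ ⊂ ℝ^M and η_ε a standard mollifier supported in {|y|<ε}. Then ‖f_ε g_ε − (fg)_ε‖_{L^{3/2}(𝒰)} ≤ C( ‖(f_ε,g_ε) − (f,g)‖²_{L³(𝒰)} + sup_{|ỹ|<ε} ‖(f,g)(·−ỹ) − (f,g)‖²_{L³(𝒰)} ) for a universal constant C, where h_ε = h∗η_ε. -/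
open MeasureTheory Metric Set Function
open scoped ENNReal NNReal

private lemma enn13 : (1:ℝ≥0∞)/(3/2) = 1/3 + 1/3 := by
  rw [ENNReal.div_add_div_same, one_div, ENNReal.inv_div (by norm_num) (by norm_num)]
  norm_num

private lemma enn_toReal32 : ((3:ℝ≥0∞)/2).toReal = 3/2 := by
  rw [ENNReal.toReal_div]; norm_num

lemma dqpe_aux {M : ℕ} (φ f g : EuclideanSpace ℝ (Fin M) → ℝ)
    (hφc : Continuous φ) (hφcomp : HasCompactSupport φ)
    (ε : ℝ) (hφs : Function.support φ ⊆ Metric.ball 0 ε)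
    (hφ0 : ∀ y, 0 ≤ φ y) (hφ1 : (∫ y, φ y) = 1)
    (hf : StronglyMeasurable f) (hg : StronglyMeasurable g)
    (hf3 : MemLp f 3 volume) (hg3 : MemLp g 3 volume)
    (μ : Measure (EuclideanSpace ℝ (Fin M))) [SFinite μ] :
    eLpNorm (fun x => (∫ y, φ y * f (x - y)) * (∫ y, φ y * g (x - y))
        - ∫ y, φ y * (f (x - y) * g (x - y))) (3/2) μ
      ≤ (eLpNorm (fun x =>
            (((∫ y, φ y * f (x - y)) - f x, (∫ y, φ y * g (x - y)) - g x) : ℝ × ℝ)) 3 μ) ^ 2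
        + ⨆ (z : EuclideanSpace ℝ (Fin M)) (_ : ‖z‖ < ε),
            (eLpNorm (fun x => ((f (x - z) - f x, g (x - z) - g x) : ℝ × ℝ)) 3 μ) ^ 2 := by
  classical
  -- basic facts about the exponents
  have hp0 : ((3:ℝ≥0∞)/2) ≠ 0 := by simp [ENNReal.div_eq_zero_iff]
  have hpt : ((3:ℝ≥0∞)/2) ≠ ∞ := (ENNReal.div_lt_top (by norm_num) (by norm_num)).ne
  have hone : (1:ℝ≥0∞) ≤ 3/2 := by
    rw [ENNReal.le_div_iff_mul_le (Or.inl (by norm_num)) (Or.inl (by norm_num))]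
    norm_num
  -- local integrability
  have hfl : LocallyIntegrable f volume := hf3.locallyIntegrable (by norm_num)
  have hgl : LocallyIntegrable g volume := hg3.locallyIntegrable (by norm_num)
  have hfg3 : MemLp (fun x => f x * g x) (3/2) volume := by
    have := (hg3.smul (φ := f) (r := 3/2) hf3 (hpqr := ⟨by simpa only [one_div] using enn13.symm⟩) : MemLp (f • g) (3/2) volume)
    exact this
  have hfgl : LocallyIntegrable (fun x => f x * g x) volume :=
    hfg3.locallyIntegrable hone
  -- convolution machinery
  have conv_cont : ∀ h : EuclideanSpace ℝ (Fin M) → ℝ, LocallyIntegrable h volume →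
      Continuous (fun x => ∫ y, φ y * h (x - y)) := by
    intro h hh
    have := HasCompactSupport.continuous_convolution_left
        (L := ContinuousLinearMap.lsmul ℝ ℝ) (μ := volume) hφcomp hφc hh
    exact this
  have conv_int : ∀ h : EuclideanSpace ℝ (Fin M) → ℝ, LocallyIntegrable h volume →
      ∀ x, Integrable (fun y => φ y * h (x - y)) volume := by
    intro h hh x
    have := HasCompactSupport.convolutionExists_left
        (L := ContinuousLinearMap.lsmul ℝ ℝ) (μ := volume) hφcomp hφc hh x
    simpa [ConvolutionExistsAt, ContinuousLinearMap.lsmul_apply, smul_eq_mul] using this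
  have hφint : Integrable φ volume := hφc.integrable_of_hasCompactSupport hφcomp
  set Ff : EuclideanSpace ℝ (Fin M) → ℝ := fun x => ∫ y, φ y * f (x - y) with hFf
  set Fg : EuclideanSpace ℝ (Fin M) → ℝ := fun x => ∫ y, φ y * g (x - y) with hFg
  set Ffg : EuclideanSpace ℝ (Fin M) → ℝ := fun x => ∫ y, φ y * (f (x - y) * g (x - y)) with hFfg
  set T : EuclideanSpace ℝ (Fin M) → ℝ :=
    fun x => ∫ y, φ y * ((f (x - y) - f x) * (g (x - y) - g x)) with hT
  -- the key pointwise identity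
  have key : ∀ x, Ff x * Fg x - Ffg x = (Ff x - f x) * (Fg x - g x) - T x := by
    intro x
    have i1 : Integrable (fun y => φ y * f (x - y)) volume := conv_int f hfl x
    have i2 : Integrable (fun y => φ y * g (x - y)) volume := conv_int g hgl x
    have i3 : Integrable (fun y => φ y * (f (x - y) * g (x - y))) volume := by
      have := conv_int (fun z => f z * g z) hfgl x
      simpa using this
    have i4 : Integrable (fun y => φ y * (f x * g x)) volume := hφint.mul_const _
    have i12 : Integrable (fun y => φ y * f (x - y) * g x) volume := i1.mul_const _
    have i22 : Integrable (fun y => φ y * g (x - y) * f x) volume := i2.mul_const _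
    have i312 : Integrable (fun y => φ y * (f (x - y) * g (x - y))
        - φ y * f (x - y) * g x) volume := i3.sub i12
    have i3122 : Integrable (fun y => (φ y * (f (x - y) * g (x - y))
        - φ y * f (x - y) * g x) - φ y * g (x - y) * f x) volume := i312.sub i22
    have expand : T x = Ffg x - Ff x * g x - Fg x * f x + f x * g x := by
      show (∫ y, φ y * ((f (x - y) - f x) * (g (x - y) - g x)))
          = (∫ y, φ y * (f (x - y) * g (x - y))) - (∫ y, φ y * f (x - y)) * g x
            - (∫ y, φ y * g (x - y)) * f x + f x * g x
      have h1 : (∫ y, φ y * ((f (x - y) - f x) * (g (x - y) - g x)))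
          = ∫ y, ((φ y * (f (x - y) * g (x - y)) - φ y * f (x - y) * g x)
              - φ y * g (x - y) * f x) + φ y * (f x * g x) :=
        integral_congr_ae (Filter.Eventually.of_forall fun y => by ring)
      rw [h1, integral_add i3122 i4, integral_sub i312 i22, integral_sub i3 i12,
        integral_mul_const, integral_mul_const, integral_mul_const, hφ1]
      ring
    rw [expand]; ring
  -- measurability facts
  have hFfc : Continuous Ff := conv_cont f hfl
  have hFgc : Continuous Fg := conv_cont g hgl
  have hFfgc : Continuous Ffg := by
    have := conv_cont (fun z => f z * g z) hfgl
    simpa [hFfg] using this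
  have hTm : StronglyMeasurable T := by
    have : T = fun x => (Ff x - f x) * (Fg x - g x) - (Ff x * Fg x - Ffg x) := by
      funext x; have := key x; linarith
    rw [this]
    exact (((hFfc.stronglyMeasurable.sub hf).mul (hFgc.stronglyMeasurable.sub hg)).sub
      ((hFfc.stronglyMeasurable.mul hFgc.stronglyMeasurable).sub hFfgc.stronglyMeasurable))
  -- pair function and the two RHS quantities
  set P1 : EuclideanSpace ℝ (Fin M) → ℝ × ℝ := fun x => (Ff x - f x, Fg x - g x) with hP1
  set A := eLpNorm P1 3 μ with hA
  set S := ⨆ (z : EuclideanSpace ℝ (Fin M)) (_ : ‖z‖ < ε),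
      (eLpNorm (fun x => ((f (x - z) - f x, g (x - z) - g x) : ℝ × ℝ)) 3 μ) ^ 2 with hS
  -- first term: Hölder
  have hterm1 : eLpNorm (fun x => (Ff x - f x) * (Fg x - g x)) (3/2) μ ≤ A ^ 2 := by
    have h1 : eLpNorm (fun x => (Ff x - f x) * (Fg x - g x)) (3/2) μ
        ≤ eLpNorm (fun x => Ff x - f x) 3 μ * eLpNorm (fun x => Fg x - g x) 3 μ := by
      have := eLpNorm_le_eLpNorm_mul_eLpNorm'_of_norm (μ := μ) (p := 3) (q := 3) (r := 3/2)
        ((hFfc.stronglyMeasurable.sub hf).aestronglyMeasurable)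
        ((hFgc.stronglyMeasurable.sub hg).aestronglyMeasurable)
        (fun a b => a * b) 1
        (Filter.Eventually.of_forall fun x => by
          simp [Real.norm_eq_abs, abs_mul, le_refl])
        (hpqr := ⟨by simpa only [one_div] using enn13.symm⟩)
      rwa [ENNReal.coe_one, one_mul] at this
    have h2 : eLpNorm (fun x => Ff x - f x) 3 μ ≤ A :=
      eLpNorm_mono fun x => by simpa using norm_fst_le (P1 x)
    have h3 : eLpNorm (fun x => Fg x - g x) 3 μ ≤ A :=
      eLpNorm_mono fun x => by simpa using norm_snd_le (P1 x)
    calc eLpNorm (fun x => (Ff x - f x) * (Fg x - g x)) (3/2) μ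
        ≤ eLpNorm (fun x => Ff x - f x) 3 μ * eLpNorm (fun x => Fg x - g x) 3 μ := h1
      _ ≤ A * A := mul_le_mul' h2 h3
      _ = A ^ 2 := (sq A).symm
  -- second term
  have hterm2 : eLpNorm T (3/2) μ ≤ S := by
    set ν := (volume : Measure (EuclideanSpace ℝ (Fin M))).withDensity
        (fun y => ENNReal.ofReal (φ y)) with hν
    have hφm : Measurable fun y => ENNReal.ofReal (φ y) := hφc.measurable.ennreal_ofReal
    have hνuniv : ν Set.univ = 1 := by
      rw [hν, withDensity_apply _ MeasurableSet.univ, Measure.restrict_univ,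
        ← ofReal_integral_eq_lintegral_ofReal hφint (Filter.Eventually.of_forall hφ0), hφ1,
        ENNReal.ofReal_one]
    have hνprob : IsProbabilityMeasure ν := ⟨hνuniv⟩
    set W : EuclideanSpace ℝ (Fin M) → EuclideanSpace ℝ (Fin M) → ℝ :=
      fun x y => (f (x - y) - f x) * (g (x - y) - g x) with hW
    have hWm : Measurable fun p : EuclideanSpace ℝ (Fin M) × EuclideanSpace ℝ (Fin M) =>
        W p.1 p.2 := by
      have hsub : Measurable fun p : EuclideanSpace ℝ (Fin M) × EuclideanSpace ℝ (Fin M) =>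
          p.1 - p.2 := measurable_fst.sub measurable_snd
      exact ((hf.measurable.comp hsub).sub (hf.measurable.comp measurable_fst)).mul
        ((hg.measurable.comp hsub).sub (hg.measurable.comp measurable_fst))
    have hWxm : ∀ x, Measurable fun y => (‖W x y‖₊ : ℝ≥0∞) := fun x =>
      (hWm.comp (measurable_const.prodMk measurable_id)).enorm
    have hTpt : ∀ x, (‖T x‖₊ : ℝ≥0∞) ≤ ∫⁻ y, (‖W x y‖₊ : ℝ≥0∞) ∂ν := by
      intro x
      calc (‖T x‖₊ : ℝ≥0∞) ≤ ∫⁻ y, ‖φ y * W x y‖₊ ∂volume :=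
            enorm_integral_le_lintegral_enorm _
        _ = ∫⁻ y, ENNReal.ofReal (φ y) * ‖W x y‖₊ ∂volume := by
            refine lintegral_congr fun y => ?_
            rw [nnnorm_mul, ENNReal.coe_mul, ← enorm_eq_nnnorm, Real.enorm_eq_ofReal (hφ0 y)]
        _ = ∫⁻ y, ‖W x y‖₊ ∂ν :=
            (lintegral_withDensity_eq_lintegral_mul _ hφm (hWxm x)).symm
    have hconj : Real.HolderConjugate (3/2) 3 := by constructor <;> norm_num
    have hJ : ∀ x, (∫⁻ y, (‖W x y‖₊ : ℝ≥0∞) ∂ν) ^ (3/2 : ℝ)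
        ≤ ∫⁻ y, (‖W x y‖₊ : ℝ≥0∞) ^ (3/2 : ℝ) ∂ν := by
      intro x
      have h := ENNReal.lintegral_mul_le_Lp_mul_Lq ν hconj (hWxm x).aemeasurable
        (aemeasurable_const (b := (1:ℝ≥0∞)))
      simp only [Pi.mul_apply, mul_one, ENNReal.one_rpow, lintegral_one, hνuniv, ENNReal.one_rpow,
        ENNReal.rpow_natCast] at h
      have h' := ENNReal.rpow_le_rpow h (by norm_num : (0:ℝ) ≤ 3/2)
      rwa [← ENNReal.rpow_mul, show (1/(3/2) : ℝ) * (3/2) = 1 by norm_num,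
        ENNReal.rpow_one] at h'
    have inner_le : ∀ y, ‖y‖ < ε →
        (∫⁻ x, (‖W x y‖₊ : ℝ≥0∞) ^ (3/2 : ℝ) ∂μ) ≤ S ^ (3/2 : ℝ) := by
      intro y hy
      have e1 : ∫⁻ x, (‖W x y‖₊ : ℝ≥0∞) ^ (3/2 : ℝ) ∂μ
          = (eLpNorm (fun x => W x y) (3/2) μ) ^ (3/2 : ℝ) := by
        rw [eLpNorm_eq_lintegral_rpow_enorm_toReal hp0 hpt, enn_toReal32, ← ENNReal.rpow_mul,
          show (1/(3/2) : ℝ) * (3/2) = 1 by norm_num, ENNReal.rpow_one]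
        rfl
      rw [e1]
      refine ENNReal.rpow_le_rpow ?_ (by norm_num)
      set Py : EuclideanSpace ℝ (Fin M) → ℝ × ℝ :=
        fun x => (f (x - y) - f x, g (x - y) - g x) with hPy
      have h2 : eLpNorm (fun x => W x y) (3/2) μ
          ≤ eLpNorm (fun x => ‖Py x‖ ^ (2:ℝ)) (3/2) μ := by
        refine eLpNorm_mono fun x => ?_
        have hfst : |f (x - y) - f x| ≤ ‖Py x‖ := by
          simpa [hPy, Real.norm_eq_abs] using norm_fst_le (Py x)
        have hsnd : |g (x - y) - g x| ≤ ‖Py x‖ := by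
          simpa [hPy, Real.norm_eq_abs] using norm_snd_le (Py x)
        have h0 : (0:ℝ) ≤ ‖Py x‖ := norm_nonneg _
        have hr : ‖Py x‖ ^ (2:ℝ) = ‖Py x‖ * ‖Py x‖ := by
          rw [show (2:ℝ) = ((2:ℕ):ℝ) by norm_num, Real.rpow_natCast, sq]
        rw [Real.norm_eq_abs, Real.norm_eq_abs, abs_of_nonneg (Real.rpow_nonneg h0 _), hr, hW]
        calc |(f (x - y) - f x) * (g (x - y) - g x)|
            = |f (x - y) - f x| * |g (x - y) - g x| := abs_mul _ _
          _ ≤ ‖Py x‖ * ‖Py x‖ := mul_le_mul hfst hsnd (abs_nonneg _) h0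
      have h3 : eLpNorm (fun x => ‖Py x‖ ^ (2:ℝ)) (3/2) μ = (eLpNorm Py 3 μ) ^ 2 := by
        rw [eLpNorm_norm_rpow Py (by norm_num : (0:ℝ) < 2),
          show (3/2 : ℝ≥0∞) * ENNReal.ofReal 2 = 3 by
            rw [ENNReal.ofReal_ofNat, ENNReal.div_mul_cancel (by norm_num) (by norm_num)],
          show ((2:ℝ)) = ((2:ℕ):ℝ) by norm_num, ENNReal.rpow_natCast]
      have h4 : (eLpNorm Py 3 μ) ^ 2 ≤ S :=
        le_iSup₂ (f := fun z (_ : ‖z‖ < ε) =>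
          (eLpNorm (fun x => ((f (x - z) - f x, g (x - z) - g x) : ℝ × ℝ)) 3 μ) ^ 2) y hy
      exact h2.trans (h3.le.trans h4)
    have hballae : ∀ᵐ y ∂ν, ‖y‖ < ε := by
      have hms : MeasurableSet {y : EuclideanSpace ℝ (Fin M) | ¬ ‖y‖ < ε} :=
        (measurableSet_lt measurable_norm measurable_const).compl
      have : ν {y | ¬ ‖y‖ < ε} = 0 := by
        rw [hν, withDensity_apply _ hms]
        have hz : ∀ᵐ y ∂(volume.restrict {y : EuclideanSpace ℝ (Fin M) | ¬ ‖y‖ < ε}),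
            ENNReal.ofReal (φ y) = 0 := by
          refine (ae_restrict_iff' hms).mpr (Filter.Eventually.of_forall fun y hy => ?_)
          have : φ y = 0 := by
            by_contra hne
            exact hy (by simpa [mem_ball_zero_iff] using hφs hne)
          simp [this]
        rw [lintegral_congr_ae hz, lintegral_zero]
      exact this
    have big : (∫⁻ x, (‖T x‖₊ : ℝ≥0∞) ^ (3/2 : ℝ) ∂μ) ≤ S ^ (3/2 : ℝ) := by
      have hmono : ∀ x, (‖T x‖₊ : ℝ≥0∞) ^ (3/2:ℝ) ≤
          ∫⁻ y, (‖W x y‖₊ : ℝ≥0∞) ^ (3/2:ℝ) ∂ν :=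
        fun x => le_trans (ENNReal.rpow_le_rpow (hTpt x) (by norm_num)) (hJ x)
      calc ∫⁻ x, (‖T x‖₊ : ℝ≥0∞) ^ (3/2:ℝ) ∂μ
          ≤ ∫⁻ x, ∫⁻ y, (‖W x y‖₊ : ℝ≥0∞) ^ (3/2:ℝ) ∂ν ∂μ := lintegral_mono hmono
        _ = ∫⁻ y, ∫⁻ x, (‖W x y‖₊ : ℝ≥0∞) ^ (3/2:ℝ) ∂μ ∂ν := by
            rw [lintegral_lintegral_swap]
            exact ((hWm.enorm).pow_const _).aemeasurable
        _ ≤ ∫⁻ y, S ^ (3/2:ℝ) ∂ν := by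
            refine lintegral_mono_ae ?_
            filter_upwards [hballae] with y hy
            exact inner_le y hy
        _ = S ^ (3/2:ℝ) := by simp [lintegral_const, hνuniv]
    rw [eLpNorm_eq_lintegral_rpow_enorm_toReal hp0 hpt, enn_toReal32]
    calc (∫⁻ x, (‖T x‖₊ : ℝ≥0∞) ^ ((3:ℝ)/2) ∂μ) ^ (1/((3:ℝ)/2))
        ≤ (S ^ ((3:ℝ)/2)) ^ (1/((3:ℝ)/2)) := ENNReal.rpow_le_rpow big (by norm_num)
      _ = S := by
          rw [← ENNReal.rpow_mul, show ((3:ℝ)/2) * (1/((3:ℝ)/2)) = 1 by norm_num,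
            ENNReal.rpow_one]
  -- combine
  have hcong : (fun x => Ff x * Fg x - Ffg x)
      = fun x => (Ff x - f x) * (Fg x - g x) - T x := funext key
  calc eLpNorm (fun x => Ff x * Fg x - Ffg x) (3/2) μ
      = eLpNorm (fun x => (Ff x - f x) * (Fg x - g x) - T x) (3/2) μ := by rw [hcong]
    _ ≤ eLpNorm (fun x => (Ff x - f x) * (Fg x - g x)) (3/2) μ + eLpNorm T (3/2) μ := by
        refine eLpNorm_sub_le ?_ hTm.aestronglyMeasurable hone
        exact ((hFfc.stronglyMeasurable.sub hf).mul
          (hFgc.stronglyMeasurable.sub hg)).aestronglyMeasurable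
    _ ≤ A ^ 2 + S := add_le_add hterm1 hterm2

/-- Difference-quotient product estimate: for `f, g ∈ L³(Ũ)` and a standard mollifier
`η_ε`, `‖f_ε g_ε − (fg)_ε‖_{L^{3/2}(U)}` is bounded by a universal constant times
`‖(f_ε,g_ε) − (f,g)‖²_{L³(U)} + sup_{|ỹ|<ε} ‖(f,g)(·−ỹ) − (f,g)‖²_{L³(U)}`. -/
theorem difference_quotient_product_estimate (M : ℕ) :
    ∃ C > 0, ∀ (η : EuclideanSpace ℝ (Fin M) → ℝ),
      ContDiff ℝ (⊤ : ℕ∞) η → (∀ y, 0 ≤ η y) →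
      Function.support η ⊆ Metric.ball 0 1 → (∫ y, η y) = 1 →
      ∀ (U Ut : Set (EuclideanSpace ℝ (Fin M))),
      IsOpen U → Bornology.IsBounded U → IsOpen Ut → Bornology.IsBounded Ut →
      closure U ⊆ Ut →
      ∀ f g : EuclideanSpace ℝ (Fin M) → ℝ,
      MemLp f 3 (volume.restrict Ut) → MemLp g 3 (volume.restrict Ut) →
      ∀ ε : ℝ, 0 < ε → (∀ x ∈ U, Metric.ball x ε ⊆ Ut) →
      eLpNorm
          (fun x =>
            (∫ y, ((ε ^ M)⁻¹ * η (ε⁻¹ • y)) * f (x - y))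
              * (∫ y, ((ε ^ M)⁻¹ * η (ε⁻¹ • y)) * g (x - y))
            - ∫ y, ((ε ^ M)⁻¹ * η (ε⁻¹ • y)) * (f (x - y) * g (x - y)))
          (3 / 2) (volume.restrict U)
        ≤ ENNReal.ofReal C *
          ((eLpNorm (fun x =>
              (((∫ y, ((ε ^ M)⁻¹ * η (ε⁻¹ • y)) * f (x - y)) - f x,
                (∫ y, ((ε ^ M)⁻¹ * η (ε⁻¹ • y)) * g (x - y)) - g x) : ℝ × ℝ))
              3 (volume.restrict U)) ^ 2
          + ⨆ (z : EuclideanSpace ℝ (Fin M)) (_ : ‖z‖ < ε),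
              (eLpNorm (fun x => ((f (x - z) - f x, g (x - z) - g x) : ℝ × ℝ))
                3 (volume.restrict U)) ^ 2) := by
  classical
  refine ⟨1, one_pos, ?_⟩
  intro η hη hη0 hηsupp hηint U Ut hUopen hUb hUtopen hUtb hclos f g hf hg ε hε hball
  set φ : EuclideanSpace ℝ (Fin M) → ℝ := fun y => (ε ^ M)⁻¹ * η (ε⁻¹ • y) with hφ
  have hφc : Continuous φ :=
    continuous_const.mul (hη.continuous.comp (continuous_const_smul ε⁻¹))
  have hφ0 : ∀ y, 0 ≤ φ y := fun y => mul_nonneg (inv_nonneg.2 (pow_nonneg hε.le M)) (hη0 _)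
  have hφs : support φ ⊆ ball (0 : EuclideanSpace ℝ (Fin M)) ε := by
    intro y hy
    have hy2 : η (ε⁻¹ • y) ≠ 0 := fun h => hy (by simp [hφ, h])
    have h1 := hηsupp hy2
    rw [mem_ball_zero_iff] at h1 ⊢
    rw [norm_smul, norm_inv, Real.norm_eq_abs, abs_of_pos hε] at h1
    calc ‖y‖ = ε * (ε⁻¹ * ‖y‖) := by field_simp
      _ < ε * 1 := by exact mul_lt_mul_of_pos_left h1 hε
      _ = ε := mul_one ε
  have hφcomp : HasCompactSupport φ := by
    refine HasCompactSupport.intro (isCompact_closedBall (0 : EuclideanSpace ℝ (Fin M)) ε) ?_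
    intro y hy
    by_contra h
    exact hy (ball_subset_closedBall (hφs h))
  have hφ1 : (∫ y, φ y) = 1 := by
    rw [hφ]
    rw [integral_const_mul]
    have h1 := Measure.integral_comp_inv_smul_of_nonneg
      (volume : Measure (EuclideanSpace ℝ (Fin M))) η hε.le
    rw [finrank_euclideanSpace_fin] at h1
    rw [h1, hηint, smul_eq_mul, mul_one, inv_mul_cancel₀ (pow_ne_zero M hε.ne')]
  -- measurable representatives
  have hUtm : MeasurableSet Ut := hUtopen.measurableSet
  have hUm : MeasurableSet U := hUopen.measurableSet
  set f' := Set.indicator Ut (hf.1.mk f) with hf'def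
  set g' := Set.indicator Ut (hg.1.mk g) with hg'def
  have hf'sm : StronglyMeasurable f' := hf.1.stronglyMeasurable_mk.indicator hUtm
  have hg'sm : StronglyMeasurable g' := hg.1.stronglyMeasurable_mk.indicator hUtm
  have hff' : f =ᵐ[volume.restrict Ut] f' :=
    hf.1.ae_eq_mk.trans (indicator_ae_eq_restrict hUtm).symm
  have hgg' : g =ᵐ[volume.restrict Ut] g' :=
    hg.1.ae_eq_mk.trans (indicator_ae_eq_restrict hUtm).symm
  have hf'3 : MemLp f' 3 volume := by
    refine ⟨hf'sm.aestronglyMeasurable, ?_⟩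
    rw [hf'def, eLpNorm_indicator_eq_eLpNorm_restrict hUtm,
      eLpNorm_congr_ae hf.1.ae_eq_mk.symm]
    exact hf.2
  have hg'3 : MemLp g' 3 volume := by
    refine ⟨hg'sm.aestronglyMeasurable, ?_⟩
    rw [hg'def, eLpNorm_indicator_eq_eLpNorm_restrict hUtm,
      eLpNorm_congr_ae hg.1.ae_eq_mk.symm]
    exact hg.2
  have haef : ∀ᵐ z ∂(volume : Measure (EuclideanSpace ℝ (Fin M))), z ∈ Ut → f z = f' z :=
    (ae_restrict_iff' hUtm).mp hff'
  have haeg : ∀ᵐ z ∂(volume : Measure (EuclideanSpace ℝ (Fin M))), z ∈ Ut → g z = g' z :=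
    (ae_restrict_iff' hUtm).mp hgg'
  have haefg : ∀ᵐ z ∂(volume : Measure (EuclideanSpace ℝ (Fin M))),
      z ∈ Ut → f z * g z = f' z * g' z := by
    filter_upwards [haef, haeg] with z h1 h2 hz
    rw [h1 hz, h2 hz]
  -- measure preserving maps
  have hmpL : ∀ x : EuclideanSpace ℝ (Fin M),
      MeasurePreserving (fun y => x - y) (volume : Measure (EuclideanSpace ℝ (Fin M))) volume := by
    intro x
    have h1 : MeasurePreserving (fun y : EuclideanSpace ℝ (Fin M) => -y) volume volume :=
      Measure.measurePreserving_neg volume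
    have h2 := measurePreserving_add_left (volume : Measure (EuclideanSpace ℝ (Fin M))) x
    simpa [Function.comp_def, sub_eq_add_neg] using h2.comp h1
  have hUsub : U ⊆ Ut := subset_closure.trans hclos
  -- convolution congruence
  have hconv : ∀ h h' : EuclideanSpace ℝ (Fin M) → ℝ,
      (∀ᵐ z ∂(volume : Measure (EuclideanSpace ℝ (Fin M))), z ∈ Ut → h z = h' z) →
      ∀ x ∈ U, (∫ y, φ y * h (x - y)) = ∫ y, φ y * h' (x - y) := by
    intro h h' hae x hx
    refine integral_congr_ae ?_
    have h2 : ∀ᵐ y ∂(volume : Measure (EuclideanSpace ℝ (Fin M))),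
        x - y ∈ Ut → h (x - y) = h' (x - y) :=
      (hmpL x).quasiMeasurePreserving.ae hae
    filter_upwards [h2] with y hy
    rcases eq_or_ne (φ y) 0 with h0 | h0
    · simp [h0]
    · have hyb : y ∈ ball (0 : EuclideanSpace ℝ (Fin M)) ε := hφs h0
      have hxy : x - y ∈ ball x ε := by
        rw [mem_ball, dist_eq_norm]
        simpa [mem_ball_zero_iff] using hyb
      rw [hy (hball x hx hxy)]
  -- shift congruence
  have hshift : ∀ (h h' : EuclideanSpace ℝ (Fin M) → ℝ),
      (∀ᵐ z ∂(volume : Measure (EuclideanSpace ℝ (Fin M))), z ∈ Ut → h z = h' z) →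
      ∀ z : EuclideanSpace ℝ (Fin M), ‖z‖ < ε →
      (fun x => h (x - z)) =ᵐ[volume.restrict U] fun x => h' (x - z) := by
    intro h h' hae z hz
    have hmp : MeasurePreserving (fun x : EuclideanSpace ℝ (Fin M) => x - z)
        (volume : Measure (EuclideanSpace ℝ (Fin M))) volume :=
      measurePreserving_sub_right volume z
    have h2 : ∀ᵐ x ∂(volume : Measure (EuclideanSpace ℝ (Fin M))),
        x - z ∈ Ut → h (x - z) = h' (x - z) :=
      hmp.quasiMeasurePreserving.ae hae
    filter_upwards [ae_restrict_of_ae h2, ae_restrict_mem hUm] with x hx hxU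
    refine hx (hball x hxU ?_)
    rw [mem_ball, dist_eq_norm]
    simpa using hz
  have hfU : f =ᵐ[volume.restrict U] f' := ae_restrict_of_ae_restrict_of_subset hUsub hff'
  have hgU : g =ᵐ[volume.restrict U] g' := ae_restrict_of_ae_restrict_of_subset hUsub hgg'
  -- apply the key lemma
  have main := dqpe_aux φ f' g' hφc hφcomp ε hφs hφ0 hφ1 hf'sm hg'sm hf'3 hg'3
    (volume.restrict U)
  rw [ENNReal.ofReal_one, one_mul]
  -- congruences between the statement for (f, g) and for (f', g')
  have eL : eLpNorm
      (fun x => (∫ y, φ y * f (x - y)) * (∫ y, φ y * g (x - y))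
        - ∫ y, φ y * (f (x - y) * g (x - y))) (3/2) (volume.restrict U)
      = eLpNorm
      (fun x => (∫ y, φ y * f' (x - y)) * (∫ y, φ y * g' (x - y))
        - ∫ y, φ y * (f' (x - y) * g' (x - y))) (3/2) (volume.restrict U) := by
    refine eLpNorm_congr_ae ?_
    filter_upwards [ae_restrict_mem hUm] with x hx
    rw [hconv f f' haef x hx, hconv g g' haeg x hx,
      hconv (fun z => f z * g z) (fun z => f' z * g' z) haefg x hx]
  have eP : eLpNorm (fun x =>
        (((∫ y, φ y * f (x - y)) - f x, (∫ y, φ y * g (x - y)) - g x) : ℝ × ℝ))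
        3 (volume.restrict U)
      = eLpNorm (fun x =>
        (((∫ y, φ y * f' (x - y)) - f' x, (∫ y, φ y * g' (x - y)) - g' x) : ℝ × ℝ))
        3 (volume.restrict U) := by
    refine eLpNorm_congr_ae ?_
    filter_upwards [hfU, hgU, ae_restrict_mem hUm] with x h1 h2 hx
    rw [hconv f f' haef x hx, hconv g g' haeg x hx, h1, h2]
  have eS : (⨆ (z : EuclideanSpace ℝ (Fin M)) (_ : ‖z‖ < ε),
        (eLpNorm (fun x => ((f (x - z) - f x, g (x - z) - g x) : ℝ × ℝ))
          3 (volume.restrict U)) ^ 2)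
      = ⨆ (z : EuclideanSpace ℝ (Fin M)) (_ : ‖z‖ < ε),
        (eLpNorm (fun x => ((f' (x - z) - f' x, g' (x - z) - g' x) : ℝ × ℝ))
          3 (volume.restrict U)) ^ 2 := by
    refine iSup_congr fun z => ?_
    by_cases hz : ‖z‖ < ε
    · simp only [iSup_pos hz]
      congr 1
      refine eLpNorm_congr_ae ?_
      filter_upwards [hshift f f' haef z hz, hshift g g' haeg z hz, hfU, hgU]
        with x h1 h2 h3 h4
      rw [h1, h2, h3, h4]
    · simp [hz]
  rw [eL, eP, eS]
  exact main
end
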